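/- Set ρ = B·e^{2b}. Let f : [−1,1] → ℝ be a broken solution with eigenvalue 0 satisfying f(−1) = 0 and f(1) = 1. Then f(0) = ρ/(1+ρ). -/

import Mathlib

/-- A "broken solution" with eigenvalue `lam` of the ODE `f'' + 2·b·f' = (log q)²·lam·f`
on `[-1,1]`: `f` is continuous on `[-1,1]`, twice continuously differentiable on
`[-1,0]` and on `[0,1]` (with one-sided derivatives at the endpoints), satisfies the
ODE on `(-1,0) ∪ (0,1)`, and its one-sided derivatives at `0` satisfy
`f'(0-) = B · f'(0+)`. -/
def IsBrokenSolution (q b B lam : ℝ) (f : ℝ → ℝ) : Prop :=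
  ContinuousOn f (Set.Icc (-1) 1) ∧
  ContDiffOn ℝ 2 f (Set.Icc (-1) 0) ∧
  ContDiffOn ℝ 2 f (Set.Icc 0 1) ∧
  (∀ x ∈ Set.Ioo (-1 : ℝ) 0 ∪ Set.Ioo (0 : ℝ) 1,
    deriv (deriv f) x + 2 * b * deriv f x = (Real.log q) ^ 2 * lam * f x) ∧
  derivWithin f (Set.Icc (-1) 0) 0 = B * derivWithin f (Set.Icc 0 1) 0

/-!
On each half-interval the eigenvalue-zero equation says that `exp (2 b x) f'(x)` is constant, so
`f(0) - f(-1) = f'(0-) ∫_{-1}^0 exp (-2 b x) dx` and `f(1) - f(0) = f'(0+) ∫_0^1 exp (-2 b x) dx`.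
A shift by one shows that the first integral is `exp (2 b)` times the second, and the gluing
condition `f'(0-) = B f'(0+)` then turns the two identities into `f(0) = ρ (1 - f(0))`.
-/

open Set Real intervalIntegral

lemma eq_exp_mul_of_hasDerivAt_const_mul {c u v : ℝ} {g : ℝ → ℝ}
    (hg : ContinuousOn g (Icc u v)) (hd : ∀ x ∈ Ioo u v, HasDerivAt g (c * g x) x)
    {x y : ℝ} (hx : x ∈ Icc u v) (hy : y ∈ Icc u v) :
    g x = exp (c * (x - y)) * g y := by
  set φ : ℝ → ℝ := fun t => exp (-c * t) * g t
  have hφ_const : ∀ t ∈ Icc u v, φ t = φ u := by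
    intro t ht
    have hφ_deriv : ∀ s ∈ Ioo u t, HasDerivAt φ 0 s := by
      intro s hs
      have hs' : s ∈ Ioo u v := ⟨hs.1, hs.2.trans_le ht.2⟩
      have h : HasDerivAt φ (exp (-c * s) * (-c * 1) * g s + exp (-c * s) * (c * g s)) s :=
        ((hasDerivAt_id' s).const_mul (-c)).exp.mul (hd s hs')
      convert h using 1
      ring
    have hφ_cont : ContinuousOn φ (Icc u t) :=
      ((continuous_const.mul continuous_id).rexp.continuousOn.mul hg).mono
        (Icc_subset_Icc_right ht.2)
    have := integral_eq_sub_of_hasDerivAt_of_le ht.1 hφ_cont hφ_deriv intervalIntegrable_const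
    simp only [integral_zero] at this
    linarith
  have hxy : exp (-c * x) * g x = exp (-c * y) * g y := by
    exact (hφ_const x hx).trans (hφ_const y hy).symm
  calc g x = exp (c * x) * (exp (-c * x) * g x) := by
        rw [← mul_assoc, ← exp_add]; simp
    _ = exp (c * (x - y)) * g y := by
        rw [hxy, ← mul_assoc, ← exp_add]; ring_nf

variable {a u v : ℝ} {f : ℝ → ℝ}

lemma derivWithin_Icc_eq_exp_mul (huv : u < v) (hf : ContDiffOn ℝ 2 f (Icc u v))
    (hode : ∀ x ∈ Ioo u v, deriv (deriv f) x + a * deriv f x = 0)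
    {x y : ℝ} (hx : x ∈ Icc u v) (hy : y ∈ Icc u v) :
    derivWithin f (Icc u v) x = exp (-a * (x - y)) * derivWithin f (Icc u v) y := by
  refine eq_exp_mul_of_hasDerivAt_const_mul
    (hf.continuousOn_derivWithin (uniqueDiffOn_Icc huv) (by norm_num)) (fun t ht => ?_) hx hy
  have hf' : ContDiffOn ℝ 1 (deriv f) (Ioo u v) :=
    (hf.mono Ioo_subset_Icc_self).deriv_of_isOpen isOpen_Ioo (by norm_num)
  have hderiv_eq : derivWithin f (Icc u v) =ᶠ[nhds t] deriv f :=
    Filter.eventuallyEq_of_mem (Ioo_mem_nhds ht.1 ht.2)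
      fun s hs => derivWithin_of_mem_nhds (Icc_mem_nhds hs.1 hs.2)
  have hf'' : HasDerivAt (deriv f) (deriv (deriv f) t) t :=
    ((hf'.differentiableOn one_ne_zero).differentiableAt (Ioo_mem_nhds ht.1 ht.2)).hasDerivAt
  have hode_t : deriv (deriv f) t = -a * deriv f t := by linarith [hode t ht]
  rw [hderiv_eq.eq_of_nhds, ← hode_t]
  exact hf''.congr_of_eventuallyEq hderiv_eq

lemma sub_eq_derivWithin_mul_integral_exp (huv : u < v) (hf : ContDiffOn ℝ 2 f (Icc u v))
    (hode : ∀ x ∈ Ioo u v, deriv (deriv f) x + a * deriv f x = 0)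
    {y : ℝ} (hy : y ∈ Icc u v) :
    f v - f u = derivWithin f (Icc u v) y * ∫ x in u..v, exp (-a * (x - y)) := by
  rw [← integral_derivWithin_Icc_of_contDiffOn_Icc (hf.of_le (by norm_num)) huv.le,
    ← integral_const_mul]
  refine integral_congr fun x hx => ?_
  rw [uIcc_of_le huv.le] at hx
  simp only [derivWithin_Icc_eq_exp_mul huv hf hode hx hy, mul_comm]

lemma integral_exp_neg_mul_sub (a u v h : ℝ) :
    ∫ x in (u - h)..(v - h), exp (-a * x) = exp (a * h) * ∫ x in u..v, exp (-a * x) := by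
  rw [← integral_comp_sub_right, ← integral_const_mul]
  congr 1
  funext x
  rw [← exp_add]
  ring_nf

theorem brokenSolution_eigenvalue_zero_value_at_zero_general
    (q b B : ℝ) (hB : 0 < B) (f : ℝ → ℝ)
    (hf : IsBrokenSolution q b B 0 f) (hf1 : f (-1) = 0) (hf2 : f 1 = 1) :
    f 0 = B * Real.exp (2 * b) / (1 + B * Real.exp (2 * b)) := by
  obtain ⟨-, hL, hR, hode, hmatch⟩ := hf
  have hodeL : ∀ x ∈ Ioo (-1 : ℝ) 0, deriv (deriv f) x + 2 * b * deriv f x = 0 :=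
    fun x hx => by simpa using hode x (Or.inl hx)
  have hodeR : ∀ x ∈ Ioo (0 : ℝ) 1, deriv (deriv f) x + 2 * b * deriv f x = 0 :=
    fun x hx => by simpa using hode x (Or.inr hx)
  have hleft := sub_eq_derivWithin_mul_integral_exp (by norm_num) hL hodeL (y := 0)
    ⟨by norm_num, le_rfl⟩
  have hright := sub_eq_derivWithin_mul_integral_exp (by norm_num) hR hodeR (y := 0)
    ⟨le_rfl, by norm_num⟩
  have hshift := integral_exp_neg_mul_sub (2 * b) 0 1 1
  simp only [sub_zero, zero_sub, sub_self, mul_one] at hleft hright hshift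
  rw [hmatch, hf1, hshift] at hleft
  rw [hf2] at hright
  rw [eq_div_iff (by positivity)]
  linear_combination hleft - B * exp (2 * b) * hright

theorem brokenSolution_eigenvalue_zero_value_at_zero
    (q b B : ℝ) (hq : 1 < q) (hB : 0 < B) (f : ℝ → ℝ)
    (hf : IsBrokenSolution q b B 0 f) (hf1 : f (-1) = 0) (hf2 : f 1 = 1) :
    f 0 = B * Real.exp (2 * b) / (1 + B * Real.exp (2 * b)) :=
  brokenSolution_eigenvalue_zero_value_at_zero_general q b B hB f hf hf1 hf2
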